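/- arXiv:1012.0489 — 2 statements merged into one kernel-verified Lean document; each statement's English description precedes it below -/
import Mathlib

section
/- Let (W,S) be a Coxeter system with distinct simple reflections s, t₁, t₂ such that m(s,t₁) = m(s,t₂) = ∞ and m(t₁,t₂) is finite. Then the subgroup of W generated by t₁t₂s and t₁st₂ is a free group of rank 2; in particular W contains a non-abelian free subgroup. -/
/-!
`W` acts on `V = B →₀ ℝ` through its geometric representation, in which the generator `i`
acts by the reflection `v ↦ v - 2⟨v, αᵢ⟩ αᵢ` for the form `⟨αᵢ, αⱼ⟩ = -cos (π / m(i,j))`.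
Let `P` (resp. `N`) be the open cone on which `⟨v, α_s + α_{tᵢ}⟩ > 0` for `i = 1, 2` and
`⟨v, α_s⟩ > 0` (resp. `< 0`). Since `m(s,tᵢ) = ∞`, the reflection `s` maps `P` into `N`; since
moreover `cos (π / m(t₁,t₂)) ≥ 0`, each of `t₁, t₂, t₁t₂, t₂t₁, t₂t₁t₂` maps `N` into `P`.

The four letters `a = t₁t₂s`, `a⁻¹`, `b = t₁st₂`, `b⁻¹` all have the form `w s w'⁻¹` with
`w, w' ∈ {1, t₁, t₂, t₁t₂}`, where `w'` is the `w` of the inverse letter, and the quotients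
`w⁻¹w'` of two distinct elements of `{1, t₁, t₂, t₁t₂}` are among the five elements above. Hence
each letter maps the region `w • N` of every letter other than its inverse into its own region.
A vector of `P` fixed by `t₁` and `t₂` lies in no region, yet any nonempty reduced word moves it
into the region of its first letter, so the word does not act trivially.
-/

open Real

lemma Real.sin_pi_div_pos {n : ℕ} (hn : 2 ≤ n) : 0 < sin (π / n) :=
  sin_pos_of_pos_of_lt_pi (by positivity) (div_lt_self pi_pos (by exact_mod_cast hn))

namespace Module

variable {V : Type*} [AddCommGroup V] [Module ℝ V] {x y : V} {f g : Dual ℝ V}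
  (hf : f x = 2) (hg : g y = 2)

lemma sin_smul_reflection_mul_reflection_pow_apply {φ : ℝ} (hfy : f y = -2 * cos φ)
    (hgx : g x = -2 * cos φ) (k : ℕ) :
    sin φ • ((reflection hf * reflection hg) ^ k) x =
      sin ((2 * k + 1) * φ) • x + sin (2 * k * φ) • y := by
  induction k with
  | zero => simp
  | succ k ih =>
    have hsin (θ : ℝ) : sin (θ + φ) = 2 * cos φ * sin θ - sin (θ - φ) := by
      rw [sin_add, sin_sub]; ring
    have e₁ := hsin ((2 * k + 2) * φ)
    have e₂ := hsin ((2 * k + 1) * φ)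
    rw [pow_succ', LinearEquiv.mul_apply, ← LinearEquiv.map_smul, ih]
    simp only [LinearEquiv.mul_apply, reflection_apply, map_add, map_sub, map_smul, hf, hg,
      hfy, hgx]
    push_cast
    match_scalars
    · ring_nf at e₁ e₂ ⊢
      linear_combination -e₁ - 2 * cos φ * e₂
    · ring_nf at e₁ e₂ ⊢
      linear_combination -e₂

lemma reflection_mul_reflection_pow_apply_eq_self {n : ℕ} (hn : 2 ≤ n)
    (hfy : f y = -2 * cos (π / n)) (hgx : g x = -2 * cos (π / n)) :
    ((reflection hf * reflection hg) ^ n) x = x := by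
  have h := sin_smul_reflection_mul_reflection_pow_apply hf hg hfy hgx n
  rw [show (2 * n + 1) * (π / n) = π / n + 2 * π by field_simp; ring,
    show 2 * n * (π / n) = 2 * π by field_simp, sin_add_two_pi, sin_two_pi, zero_smul,
    add_zero] at h
  exact smul_right_injective V (sin_pi_div_pos hn).ne' h

lemma reflection_mul_reflection_pow_eq_one {n : ℕ} (hn : 2 ≤ n)
    (hfy : f y = -2 * cos (π / n)) (hgx : g x = -2 * cos (π / n)) :
    (reflection hf * reflection hg) ^ n = 1 := by
  set c := cos (π / n)
  have hc : 1 - c ^ 2 ≠ 0 := by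
    nlinarith [sin_sq_add_cos_sq (π / n), sin_pi_div_pos hn]
  have hx := reflection_mul_reflection_pow_apply_eq_self hf hg hn hfy hgx
  have hy : ((reflection hf * reflection hg) ^ n) y = y := by
    have hy' := reflection_mul_reflection_pow_apply_eq_self hg hf hn hgx hfy
    rw [← inv_inv (reflection hf * reflection hg), mul_inv_rev, reflection_inv, reflection_inv,
      inv_pow]
    nth_rw 2 [← hy']
    rw [← LinearEquiv.mul_apply, inv_mul_cancel]; rfl
  have hker : ∀ w, f w = 0 → g w = 0 → ((reflection hf * reflection hg) ^ n) w = w := by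
    intro w hfw hgw
    rw [LinearEquiv.coe_pow]
    refine Function.iterate_fixed ?_ n
    simp [reflection_apply, hfw, hgw]
  ext v
  set a := (f v + c * g v) / (2 * (1 - c ^ 2))
  set b := (g v + c * f v) / (2 * (1 - c ^ 2))
  have hfw : f (v - a • x - b • y) = 0 := by
    simp only [map_sub, map_smul, hf, hfy, smul_eq_mul, a, b]
    field_simp
    ring
  have hgw : g (v - a • x - b • y) = 0 := by
    simp only [map_sub, map_smul, hg, hgx, smul_eq_mul, a, b]
    field_simp
    ring
  calc ((reflection hf * reflection hg) ^ n) v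
      = ((reflection hf * reflection hg) ^ n) (a • x + b • y + (v - a • x - b • y)) := by
        congr 1; abel
    _ = v := by
        rw [map_add, map_add, map_smul, map_smul, hx, hy, hker _ hfw hgw]; abel

end Module

namespace FreeGroup

open scoped Pointwise

variable {ι G α : Type*} [Group G] [MulAction G α]

theorem injective_lift_of_ping_pong_basepoint (a : ι → G) (Z : ι × Bool → Set α) (u : α)
    (hu : ∀ p, u ∉ Z p) (hbase : ∀ p, lift a (mk [p]) • u ∈ Z p)
    (hstep : ∀ p q, (p.1 = q.1 → p.2 = q.2) → lift a (mk [p]) • Z q ⊆ Z p) :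
    Function.Injective (lift a) := by
  classical
  have key (L : List (ι × Bool)) :
      ∀ p, IsReduced (p :: L) → lift a (mk (p :: L)) • u ∈ Z p := by
    induction L with
    | nil => exact fun p _ => hbase p
    | cons q L ih =>
      intro p hL
      rw [isReduced_cons_cons] at hL
      rw [← List.singleton_append, ← mul_mk, _root_.map_mul, mul_smul]
      exact hstep p q hL.1 (Set.smul_mem_smul_set (ih q hL.2))
  rw [injective_iff_map_eq_one]
  intro g hg
  by_contra hne
  obtain ⟨p, L, hpL⟩ := List.exists_cons_of_ne_nil (mt toWord_eq_nil_iff.mp hne)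
  have := key L p (hpL ▸ isReduced_toWord)
  rw [← hpL, mk_toWord, hg, one_smul] at this
  exact hu p this

theorem injective_lift_of_ping_pong_involution (a : ι → G) {σ : G} (hσ : σ⁻¹ = σ)
    (w : ι × Bool → G) (ha : ∀ i, a i = w (i, true) * σ * (w (i, false))⁻¹) {C D : Set α}
    {u : α} (hσD : σ • D ⊆ C) (hw : ∀ p q, p ≠ q → ((w p)⁻¹ * w q) • C ⊆ D) (hu : u ∈ D)
    (huC : u ∉ C) (hwu : ∀ p, w p • u = u) :
    Function.Injective (lift a) := by
  have hletter (p : ι × Bool) : lift a (mk [p]) = w p * σ * (w (p.1, !p.2))⁻¹ := by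
    obtain ⟨i, _ | _⟩ := p <;> simp [lift_mk, ha, hσ, mul_assoc]
  refine injective_lift_of_ping_pong_basepoint a (fun p => w p • C) u (fun p hp => ?_)
    (fun p => ?_) (fun p q hpq => ?_)
  · rw [Set.mem_smul_set_iff_inv_smul_mem, inv_smul_eq_iff.mpr (hwu p).symm] at hp
    exact huC hp
  · rw [hletter, mul_smul, inv_smul_eq_iff.mpr (hwu _).symm, mul_smul]
    exact Set.smul_mem_smul_set (hσD (Set.smul_mem_smul_set hu))
  · have hne : (p.1, !p.2) ≠ q := by
      rintro rfl
      simp at hpq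
    calc lift a (mk [p]) • w q • C = w p • σ • ((w (p.1, !p.2))⁻¹ * w q) • C := by
          simp only [hletter, smul_smul, mul_assoc]
      _ ⊆ w p • σ • D := Set.smul_set_mono (Set.smul_set_mono (hw _ _ hne))
      _ ⊆ w p • C := Set.smul_set_mono hσD

end FreeGroup

namespace CoxeterMatrix

open scoped Pointwise

variable {B : Type*} (M : CoxeterMatrix B)

/-- `geomCoroot i v = 2⟨v, αᵢ⟩`. Since `π / 0 = 0`, an entry `M i j = 0` (that is, `m(i,j) = ∞`)
gives `⟨αᵢ, αⱼ⟩ = -cos 0 = -1`, as it should. -/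
noncomputable def geomCoroot (i : B) : Module.Dual ℝ (B →₀ ℝ) :=
  Finsupp.linearCombination ℝ fun j => -2 * cos (π / M i j)

lemma geomCoroot_single (i j : B) :
    M.geomCoroot i (Finsupp.single j 1) = -2 * cos (π / M i j) := by
  simp [geomCoroot]

lemma geomCoroot_single_self (i : B) : M.geomCoroot i (Finsupp.single i 1) = 2 := by
  simp [geomCoroot_single]

noncomputable def geomReflection (i : B) : (B →₀ ℝ) ≃ₗ[ℝ] (B →₀ ℝ) :=
  Module.reflection (M.geomCoroot_single_self i)

@[simp]
lemma geomReflection_inv (i : B) : (M.geomReflection i)⁻¹ = M.geomReflection i :=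
  Module.reflection_inv _

@[simp]
lemma geomReflection_mul_self (i : B) : M.geomReflection i * M.geomReflection i = 1 := by
  nth_rw 1 [← geomReflection_inv]
  exact inv_mul_cancel _

@[simp]
lemma geomReflection_mul_cancel_left (i : B) (g : (B →₀ ℝ) ≃ₗ[ℝ] (B →₀ ℝ)) :
    M.geomReflection i * (M.geomReflection i * g) = g := by
  nth_rw 1 [← geomReflection_inv]
  exact inv_mul_cancel_left _ _

lemma geomCoroot_geomReflection (i j : B) (v : B →₀ ℝ) :
    M.geomCoroot j (M.geomReflection i v) =
      M.geomCoroot j v + 2 * cos (π / M i j) * M.geomCoroot i v := by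
  rw [geomReflection, Module.reflection_apply, map_sub, map_smul, geomCoroot_single, M.symmetric,
    smul_eq_mul]
  ring

lemma isLiftable_geomReflection : M.IsLiftable M.geomReflection := by
  intro i j
  obtain rfl | hij := eq_or_ne i j
  · rw [M.diagonal, pow_one, geomReflection_mul_self]
  obtain h0 | h0 := eq_or_ne (M i j) 0
  · rw [h0, pow_zero]
  have h1 : M i j ≠ 1 := M.off_diagonal i j hij
  refine Module.reflection_mul_reflection_pow_eq_one _ _ (by omega) ?_ ?_
  · rw [geomCoroot_single]
  · rw [geomCoroot_single, M.symmetric]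

lemma cos_pi_div_nonneg {i j : B} (hij : i ≠ j) : 0 ≤ cos (π / M i j) := by
  have h1 : M i j ≠ 1 := M.off_diagonal i j hij
  obtain h0 | h0 := eq_or_ne (M i j) 0
  · simp [h0]
  have h2 : (2 : ℝ) ≤ M i j := by exact_mod_cast (show 2 ≤ M i j by omega)
  apply cos_nonneg_of_neg_pi_div_two_le_of_le
  · linarith [show 0 ≤ π / M i j by positivity, pi_pos]
  · exact div_le_div_of_nonneg_left pi_pos.le two_pos h2

variable {s t₁ t₂ : B}

def posCone (s t₁ t₂ : B) : Set (B →₀ ℝ) :=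
  {v | 0 < M.geomCoroot s v ∧ 0 < M.geomCoroot s v + M.geomCoroot t₁ v ∧
    0 < M.geomCoroot s v + M.geomCoroot t₂ v}

def negCone (s t₁ t₂ : B) : Set (B →₀ ℝ) :=
  {v | M.geomCoroot s v < 0 ∧ 0 < M.geomCoroot s v + M.geomCoroot t₁ v ∧
    0 < M.geomCoroot s v + M.geomCoroot t₂ v}

lemma geomReflection_smul_posCone_subset (h₁ : M s t₁ = 0) (h₂ : M s t₂ = 0) :
    M.geomReflection s • M.posCone s t₁ t₂ ⊆ M.negCone s t₁ t₂ := by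
  rintro _ ⟨v, ⟨hp, hq, hr⟩, rfl⟩
  simp only [negCone, Set.mem_ofPred_eq, LinearEquiv.smul_def, geomCoroot_geomReflection, h₁, h₂,
    M.diagonal, Nat.cast_zero, Nat.cast_one, div_zero, div_one, cos_zero, cos_pi]
  refine ⟨?_, ?_, ?_⟩ <;> linarith

lemma smul_negCone_subset_posCone (h₁ : M s t₁ = 0) (h₂ : M s t₂ = 0) (ht : t₁ ≠ t₂)
    {g : (B →₀ ℝ) ≃ₗ[ℝ] (B →₀ ℝ)}
    (hg : g ∈ ({M.geomReflection t₁, M.geomReflection t₂,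
      M.geomReflection t₁ * M.geomReflection t₂, M.geomReflection t₂ * M.geomReflection t₁,
      M.geomReflection t₂ * M.geomReflection t₁ * M.geomReflection t₂} : Set _)) :
    g • M.negCone s t₁ t₂ ⊆ M.posCone s t₁ t₂ := by
  have hc := M.cos_pi_div_nonneg ht
  rw [M.symmetric] at h₁ h₂
  have h₂₁ : M t₂ t₁ = M t₁ t₂ := M.symmetric _ _
  rintro _ ⟨v, ⟨hp, hq, hr⟩, rfl⟩
  have hq' : 0 < M.geomCoroot t₁ v := by linarith
  have hr' : 0 < M.geomCoroot t₂ v := by linarith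
  rcases hg with rfl | rfl | rfl | rfl | rfl <;>
  simp only [posCone, Set.mem_ofPred_eq, LinearEquiv.smul_def, LinearEquiv.mul_apply,
    geomCoroot_geomReflection, h₁, h₂, h₂₁, M.diagonal, Nat.cast_zero, Nat.cast_one, div_zero,
    div_one, cos_zero, cos_pi] <;>
  refine ⟨?_, ?_, ?_⟩ <;>
  nlinarith [mul_nonneg hc hq'.le, mul_nonneg hc hr'.le, mul_nonneg (mul_nonneg hc hc) hq'.le,
    mul_nonneg (mul_nonneg hc hc) hr'.le]

lemma geomReflection_apply_of_geomCoroot_eq_zero {i : B} {v : B →₀ ℝ}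
    (hv : M.geomCoroot i v = 0) : M.geomReflection i v = v := by
  rw [geomReflection, Module.reflection_apply, hv, zero_smul, sub_zero]

lemma exists_mem_posCone_fixed (h₁ : M s t₁ = 0) (h₂ : M s t₂ = 0) (ht : t₁ ≠ t₂) :
    ∃ u ∈ M.posCone s t₁ t₂, M.geomReflection t₁ u = u ∧ M.geomReflection t₂ u = u := by
  set c := cos (π / M t₁ t₂)
  have hc : 0 ≤ c := M.cos_pi_div_nonneg ht
  set u : B →₀ ℝ := (c - 1) • Finsupp.single s 1 - Finsupp.single t₁ 1 - Finsupp.single t₂ 1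
  have hu (i : B) : M.geomCoroot i u =
      -2 * ((c - 1) * cos (π / M i s) - cos (π / M i t₁) - cos (π / M i t₂)) := by
    simp only [u, map_sub, map_smul, geomCoroot_single, smul_eq_mul]
    ring
  have hus : M.geomCoroot s u = 2 * c + 2 := by
    rw [hu]
    simp only [M.diagonal, h₁, h₂, Nat.cast_zero, Nat.cast_one, div_zero, div_one, cos_zero,
      cos_pi]
    ring
  rw [M.symmetric] at h₁ h₂
  have hu₁ : M.geomCoroot t₁ u = 0 := by
    simp [hu, h₁, c]
  have hu₂ : M.geomCoroot t₂ u = 0 := by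
    simp [hu, h₂, M.symmetric t₂ t₁, c]
  refine ⟨u, ⟨?_, ?_, ?_⟩, M.geomReflection_apply_of_geomCoroot_eq_zero hu₁,
    M.geomReflection_apply_of_geomCoroot_eq_zero hu₂⟩ <;> linarith

theorem injective_lift_geomReflection (h₁ : M s t₁ = 0) (h₂ : M s t₂ = 0) (ht : t₁ ≠ t₂) :
    Function.Injective (FreeGroup.lift
      ![M.geomReflection t₁ * M.geomReflection t₂ * M.geomReflection s,
        M.geomReflection t₁ * M.geomReflection s * M.geomReflection t₂]) := by
  obtain ⟨u, hu, hu₁, hu₂⟩ := M.exists_mem_posCone_fixed h₁ h₂ ht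
  let w (p : Fin 2 × Bool) : (B →₀ ℝ) ≃ₗ[ℝ] (B →₀ ℝ) :=
    cond p.2 (![M.geomReflection t₁ * M.geomReflection t₂, M.geomReflection t₁] p.1)
      (![1, M.geomReflection t₂] p.1)
  refine FreeGroup.injective_lift_of_ping_pong_involution _ (M.geomReflection_inv s) w
    (fun i => ?_) (M.geomReflection_smul_posCone_subset h₁ h₂) (fun p q hpq => ?_) hu
    (fun h => lt_asymm hu.1 h.1) (fun p => ?_)
  · fin_cases i <;> simp [w]
  · refine M.smul_negCone_subset_posCone h₁ h₂ ht ?_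
    obtain ⟨i, _ | _⟩ := p <;> obtain ⟨j, _ | _⟩ := q <;> fin_cases i <;> fin_cases j <;>
      simp [w, mul_assoc] at hpq ⊢
  · obtain ⟨i, _ | _⟩ := p <;> fin_cases i <;> simp [w, hu₁, hu₂]

end CoxeterMatrix

namespace CoxeterSystem

variable {B W : Type*} [Group W] {M : CoxeterMatrix B} (cs : CoxeterSystem M W)

noncomputable def geomRep : W →* (B →₀ ℝ) ≃ₗ[ℝ] (B →₀ ℝ) :=
  cs.lift ⟨M.geomReflection, M.isLiftable_geomReflection⟩

lemma geomRep_simple (i : B) : cs.geomRep (cs.simple i) = M.geomReflection i :=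
  cs.lift_apply_simple _ i

end CoxeterSystem

theorem free_subgroup_of_rank_two_general {B W : Type*} [Group W] {M : CoxeterMatrix B}
    (cs : CoxeterSystem M W) (s t₁ t₂ : B)
    (ht : t₁ ≠ t₂)
    (h₁ : M s t₁ = 0) (h₂ : M s t₂ = 0) :
    Function.Injective
      (FreeGroup.lift
        ![cs.simple t₁ * cs.simple t₂ * cs.simple s,
          cs.simple t₁ * cs.simple s * cs.simple t₂] :
        FreeGroup (Fin 2) →* W) := by
  have hρ : cs.geomRep.comp (FreeGroup.lift ![cs.simple t₁ * cs.simple t₂ * cs.simple s,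
      cs.simple t₁ * cs.simple s * cs.simple t₂]) =
      FreeGroup.lift ![M.geomReflection t₁ * M.geomReflection t₂ * M.geomReflection s,
        M.geomReflection t₁ * M.geomReflection s * M.geomReflection t₂] := by
    ext i
    fin_cases i <;> simp [cs.geomRep_simple]
  refine Function.Injective.of_comp (f := cs.geomRep) ?_
  rw [← MonoidHom.coe_comp, hρ]
  exact M.injective_lift_geomReflection h₁ h₂ ht

/-- with `m(s,t₁) = m(s,t₂) = ∞` and `m(t₁,t₂)` finite, the subgroup
generated by `t₁t₂s` and `t₁st₂` is free of rank 2: the homomorphism from the free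
group on two generators sending them to these elements is injective. -/
theorem free_subgroup_of_rank_two {B W : Type*} [Group W] {M : CoxeterMatrix B}
    (cs : CoxeterSystem M W) (s t₁ t₂ : B)
    (hst₁ : s ≠ t₁) (hst₂ : s ≠ t₂) (ht : t₁ ≠ t₂)
    (h₁ : M s t₁ = 0) (h₂ : M s t₂ = 0) (hm : M t₁ t₂ ≠ 0) :
    Function.Injective
      (FreeGroup.lift
        ![cs.simple t₁ * cs.simple t₂ * cs.simple s,
          cs.simple t₁ * cs.simple s * cs.simple t₂] :
        FreeGroup (Fin 2) →* W) :=
  free_subgroup_of_rank_two_general cs s t₁ t₂ ht h₁ h₂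
end

section
/- Let W be the Weyl group of type D₄ with simple reflections s₁, s₂, s₃, s₄, where s₂ is the central node (m(s₂,s_i) = 3 for i = 1,3,4 and m(s_i,s_j) = 2 for distinct i,j ∈ {1,3,4}). Then the element v = s₂s₄s₁s₃s₂s₁s₃s₂s₄s₂s₁ is an involution of length 11, and v is not equal to the longest element of any standard parabolic subgroup W_I, I ⊆ {s₁,s₂,s₃,s₄}. -/
/-- The Coxeter matrix of type D₄, with central node indexed by `1`
(so `s₁,s₂,s₃,s₄` of the paper correspond to indices `0,1,2,3`). -/
def D4Matrix : CoxeterMatrix (Fin 4) :=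
  ⟨!![1, 3, 2, 2; 3, 1, 3, 3; 2, 3, 1, 2; 2, 3, 2, 1], by decide, by decide,
    fun i i' h => by fin_cases i <;> fin_cases i' <;> simp_all <;> decide⟩

/-!
Realise `W(D₄)` as signed permutations of `±e₁, …, ±e₄`. A simple reflection sends only its own
simple root from the positive roots to the negative ones, so the number of positive roots that
`w` makes negative is a lower bound for `ℓ(w)`. This number is `11` for `v` and `12` for `v s₃`,
hence `ℓ(v) = 11` and `v` is not the longest element of `W` itself. A proper parabolic subgroup
`W_I` with `s_i ∉ I` fixes the fundamental coweight `ω_i`, which `v` moves, so `v ∉ W_I`.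
Finally `v` is an involution because its reduced word is braid-equivalent to its reverse.
-/

section InversionCount

open Finset

variable {G X : Type*} [Group G] [MulAction G X] [DecidableEq X] (P : Finset X)

def inversionCount (g : G) : ℕ := #{x ∈ P | g • x ∉ P}

theorem inversionCount_one : inversionCount P (1 : G) = 0 := by
  simp [inversionCount]

theorem inversionCount_mul_le {t : G} {β : X} (ht : ∀ x ∈ P, x ≠ β → t • x ∈ P) (g : G) :
    inversionCount P (t * g) ≤ inversionCount P g + 1 := by
  have hsub : {x ∈ P | (t * g) • x ∉ P} ⊆ insert (g⁻¹ • β) {x ∈ P | g • x ∉ P} := by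
    intro x hx
    simp only [mem_filter, mem_insert, mul_smul] at hx ⊢
    by_cases hβ : g • x = β
    · exact Or.inl (eq_inv_smul_iff.mpr hβ)
    · exact Or.inr ⟨hx.1, fun hgx => hx.2 (ht _ hgx hβ)⟩
  exact (card_le_card hsub).trans (card_insert_le _ _)

end InversionCount

namespace CoxeterMatrix

variable {B : Type*} [DecidableEq B] (M : CoxeterMatrix B)

def braidMove (p : ℕ) (i j : B) (ω : List B) : Option (List B) :=
  if (ω.drop p).take (M i j) = CoxeterSystem.braidWord M i j then
    some (ω.take p ++ CoxeterSystem.braidWord M j i ++ ω.drop (p + M i j))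
  else none

def braidMoves (moves : List (ℕ × B × B)) (ω : List B) : Option (List B) :=
  moves.foldlM (fun ω m => M.braidMove m.1 m.2.1 m.2.2 ω) ω

end CoxeterMatrix

namespace CoxeterSystem

variable {B W : Type*} [Group W] {M : CoxeterMatrix B} (cs : CoxeterSystem M W)

theorem inversionCount_le_length {G X : Type*} [Group G] [MulAction G X] [DecidableEq X]
    (P : Finset X) (φ : W →* G) (β : B → X)
    (hβ : ∀ i, ∀ x ∈ P, x ≠ β i → φ (cs.simple i) • x ∈ P) (w : W) :
    inversionCount P (φ w) ≤ cs.length w := by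
  have hword : ∀ ω : List B, inversionCount P (φ (cs.wordProd ω)) ≤ ω.length := by
    intro ω
    induction ω with
    | nil => simp [inversionCount_one]
    | cons i ω ih =>
      rw [wordProd_cons, map_mul, List.length_cons]
      exact (inversionCount_mul_le P (hβ i) _).trans (by omega)
  obtain ⟨ω, hω, rfl⟩ := cs.exists_isReduced w
  exact hω.eq ▸ hword ω

theorem closure_simple_le_comap_stabilizer {G X : Type*} [Group G] [MulAction G X]
    (φ : W →* G) {I : Set B} {x : X} (hx : ∀ i ∈ I, φ (cs.simple i) • x = x) :
    Subgroup.closure (cs.simple '' I) ≤ (MulAction.stabilizer G x).comap φ := by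
  rw [Subgroup.closure_le]
  rintro _ ⟨i, hi, rfl⟩
  exact hx i hi

theorem wordProd_eq_of_braidMove_eq_some [DecidableEq B] {p : ℕ} {i j : B} {ω ω' : List B}
    (h : M.braidMove p i j ω = some ω') : cs.wordProd ω' = cs.wordProd ω := by
  unfold CoxeterMatrix.braidMove at h
  split_ifs at h with hω
  cases h
  have hsplit : ω = ω.take p ++ (braidWord M i j ++ ω.drop (p + M i j)) := by
    rw [← hω, ← List.drop_drop, List.take_append_drop, List.take_append_drop]
  conv_rhs => rw [hsplit]
  simp only [wordProd_append, wordProd_braidWord_eq, mul_assoc]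

theorem wordProd_eq_of_braidMoves_eq_some [DecidableEq B] {moves : List (ℕ × B × B)}
    {ω ω' : List B} (h : M.braidMoves moves ω = some ω') : cs.wordProd ω' = cs.wordProd ω := by
  induction moves generalizing ω with
  | nil => cases h; rfl
  | cons m moves ih =>
    simp only [CoxeterMatrix.braidMoves, List.foldlM_cons] at h
    cases hm : M.braidMove m.1 m.2.1 m.2.2 ω with
    | none => simp [hm] at h
    | some ω₁ =>
      rw [hm] at h
      exact (ih h).trans (cs.wordProd_eq_of_braidMove_eq_some hm)

end CoxeterSystem

namespace WeylGroupD4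

open Equiv Pointwise

/-- `e_{k+1}` is encoded as `k` and `-e_{k+1}` as `k + 4`. -/
def signedPerm : Fin 4 → Perm (Fin 8) :=
  ![swap 0 1 * swap 4 5, swap 1 2 * swap 5 6, swap 2 3 * swap 6 7, swap 2 7 * swap 3 6]

theorem isLiftable_signedPerm : D4Matrix.IsLiftable signedPerm := by
  unfold CoxeterMatrix.IsLiftable
  decide

/-- The root `±e_k ± e_l` is encoded as the pair of its two summands. -/
def positiveRoots : Finset (Finset (Fin 8)) :=
  {{0, 1}, {0, 2}, {0, 3}, {1, 2}, {1, 3}, {2, 3}, {0, 5}, {0, 6}, {0, 7}, {1, 6}, {1, 7}, {2, 7}}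

def simpleRoot : Fin 4 → Finset (Fin 8) := ![{0, 5}, {1, 6}, {2, 7}, {2, 3}]

theorem signedPerm_smul_mem_positiveRoots :
    ∀ i, ∀ x ∈ positiveRoots, x ≠ simpleRoot i → signedPerm i • x ∈ positiveRoots := by
  decide +kernel

/-- `ω_i` is encoded as a set of signed unit vectors whose sum is a positive multiple of `ω_i`. -/
def fundamentalCoweight : Fin 4 → Finset (Fin 8) := ![{0}, {0, 1}, {0, 1, 2, 7}, {0, 1, 2, 3}]

theorem signedPerm_smul_fundamentalCoweight :
    ∀ i j, j ≠ i → signedPerm j • fundamentalCoweight i = fundamentalCoweight i := by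
  decide +kernel

def vWord : List (Fin 4) := [1, 3, 0, 2, 1, 0, 2, 1, 3, 1, 0]

theorem braidMoves_vWord :
    D4Matrix.braidMoves [(5, 0, 2), (3, 1, 2), (5, 0, 1), (7, 0, 3), (8, 1, 0), (6, 3, 1),
      (5, 0, 3), (4, 2, 3), (5, 2, 0), (1, 3, 0), (8, 3, 0), (2, 1, 3), (0, 0, 1), (2, 0, 3),
      (3, 1, 0), (5, 2, 1), (4, 0, 2)] vWord = some vWord.reverse := by
  decide

theorem inversionCount_vWord :
    inversionCount positiveRoots (vWord.map signedPerm).prod = 11 := by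
  decide +kernel

theorem inversionCount_vWord_append :
    inversionCount positiveRoots ((vWord ++ [2]).map signedPerm).prod = 12 := by
  decide +kernel

theorem vWord_smul_fundamentalCoweight_ne :
    ∀ i, (vWord.map signedPerm).prod • fundamentalCoweight i ≠ fundamentalCoweight i := by
  decide +kernel

variable {W : Type*} [Group W] (cs : CoxeterSystem D4Matrix W)

def signedPermHom : W →* Perm (Fin 8) := cs.lift ⟨signedPerm, isLiftable_signedPerm⟩

theorem signedPermHom_simple (i : Fin 4) : signedPermHom cs (cs.simple i) = signedPerm i :=
  cs.lift_apply_simple isLiftable_signedPerm i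

theorem signedPermHom_wordProd (ω : List (Fin 4)) :
    signedPermHom cs (cs.wordProd ω) = (ω.map signedPerm).prod := by
  simp only [CoxeterSystem.wordProd, map_list_prod, List.map_map]
  congr 2
  funext i
  exact signedPermHom_simple cs i

theorem isReduced_of_inversionCount_eq {ω : List (Fin 4)}
    (h : inversionCount positiveRoots (ω.map signedPerm).prod = ω.length) : cs.IsReduced ω := by
  refine le_antisymm (cs.length_wordProd_le ω) ?_
  have := cs.inversionCount_le_length positiveRoots (signedPermHom cs) simpleRoot
    (fun i => signedPermHom_simple cs i ▸ signedPerm_smul_mem_positiveRoots i) (cs.wordProd ω)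
  rwa [signedPermHom_wordProd, h] at this

theorem wordProd_vWord_mul_self : cs.wordProd vWord * cs.wordProd vWord = 1 := by
  have h := cs.wordProd_eq_of_braidMoves_eq_some braidMoves_vWord
  rw [CoxeterSystem.wordProd_reverse] at h
  nth_rewrite 1 [← h]
  exact inv_mul_cancel _

theorem wordProd_vWord_notMem_closure_simple {I : Set (Fin 4)} {i : Fin 4} (hi : i ∉ I) :
    cs.wordProd vWord ∉ Subgroup.closure (cs.simple '' I) := by
  intro hv
  have hfix := cs.closure_simple_le_comap_stabilizer (signedPermHom cs)
    (x := fundamentalCoweight i) (fun j hj => signedPermHom_simple cs j ▸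
      signedPerm_smul_fundamentalCoweight i j (ne_of_mem_of_not_mem hj hi)) hv
  rw [Subgroup.mem_comap, MulAction.mem_stabilizer_iff, signedPermHom_wordProd] at hfix
  exact vWord_smul_fundamentalCoweight_ne i hfix

end WeylGroupD4

open WeylGroupD4 in
/-- in W(D₄), the element `v = s₂s₄s₁s₃s₂s₁s₃s₂s₄s₂s₁` is an involution
of length 11 which is not the longest element of any standard parabolic subgroup. -/
theorem D4_distinguished_involution_not_parabolic_longest {W : Type*} [Group W]
    (cs : CoxeterSystem D4Matrix W) (v : W)
    (hv : v = cs.simple 1 * cs.simple 3 * cs.simple 0 * cs.simple 2 * cs.simple 1 *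
      cs.simple 0 * cs.simple 2 * cs.simple 1 * cs.simple 3 * cs.simple 1 * cs.simple 0) :
    v * v = 1 ∧
    cs.length v = 11 ∧
    ∀ I : Set (Fin 4),
      ¬ (v ∈ Subgroup.closure (cs.simple '' I) ∧
        ∀ u ∈ Subgroup.closure (cs.simple '' I), cs.length u ≤ cs.length v) := by
  obtain rfl : v = cs.wordProd vWord := by
    simp [hv, vWord, CoxeterSystem.wordProd, mul_assoc]
  have hlength : cs.length (cs.wordProd vWord) = 11 :=
    isReduced_of_inversionCount_eq cs inversionCount_vWord
  refine ⟨wordProd_vWord_mul_self cs, hlength, fun I ⟨hvI, hmax⟩ => ?_⟩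
  by_cases hI : I = Set.univ
  · subst hI
    have hlength_append : cs.length (cs.wordProd (vWord ++ [2])) = 12 :=
      isReduced_of_inversionCount_eq cs inversionCount_vWord_append
    have := hmax (cs.wordProd (vWord ++ [2])) (by simp [cs.subgroup_closure_range_simple])
    omega
  · obtain ⟨i, hi⟩ := (Set.ne_univ_iff_exists_notMem I).mp hI
    exact wordProd_vWord_notMem_closure_simple cs hi hvI
end
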